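/- arXiv:1302.5469 — 4 statements merged into one kernel-verified Lean document; each statement's English description precedes it below -/
import Mathlib

section
/- Let A = [[1,10],[0,1]] and, for k with 1 ≤ k ≤ n, let γ_k(t) = A^(k-1) · [[0,1],[-1, 5+(t-2)i]] · A^(-(k-1)) for t ∈ [0,4]. Then the isometric sphere of γ_k(t)⁻¹ has radius 1 and center 10(k-1), and the isometric sphere of γ_k(t) has radius 1 and center 5 + 10(k-1) + (t-2)i. In particular, for all choices of parameters t_k ∈ [0,4], the 2n isometric spheres of γ_1^{±1}, ..., γ_n^{±1} are pairwise disjoint. -/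
open Complex

/-- Euclidean center `-d/c` of the isometric sphere of a matrix `[[a,b],[c,d]]`. -/
noncomputable def sphereCenter (M : Matrix (Fin 2) (Fin 2) ℂ) : ℂ := -(M 1 1) / M 1 0

/-- Euclidean radius `1/|c|` of the isometric sphere of a matrix `[[a,b],[c,d]]`. -/
noncomputable def sphereRadius (M : Matrix (Fin 2) (Fin 2) ℂ) : ℝ := 1 / ‖M 1 0‖

/-- The parabolic matrix `A = [[1,10],[0,1]]`. -/
noncomputable def Amat : Matrix (Fin 2) (Fin 2) ℂ := !![1, 10; 0, 1]

/-- `γ_k(t) = A^(k-1) [[0,1],[-1,5+(t-2)i]] A^(-(k-1))`, indexed here by `k : Fin n`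
(so `k` plays the role of `k-1 ∈ {0, …, n-1}`). -/
noncomputable def γmat {n : ℕ} (k : Fin n) (t : ℝ) : Matrix (Fin 2) (Fin 2) ℂ :=
  Amat ^ (k : ℕ) * !![0, 1; -1, 5 + (t - 2) * Complex.I] * (Amat ^ (k : ℕ))⁻¹

/-- Center and radius of the isometric sphere of `γ_k(t_k)^ε`, where `ε = +1` when the
boolean is `true` and `ε = -1` when it is `false`. -/
noncomputable def sph {n : ℕ} (t : Fin n → ℝ) (p : Fin n × Bool) : ℂ × ℝ :=
  if p.2 then (sphereCenter (γmat p.1 (t p.1)), sphereRadius (γmat p.1 (t p.1)))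
  else (sphereCenter ((γmat p.1 (t p.1))⁻¹), sphereRadius ((γmat p.1 (t p.1))⁻¹))

/-!
Conjugation by the translation `A^k = [[1,10k],[0,1]]` keeps the lower-left entry of a matrix
and shifts the centre of its isometric sphere by `10k`. The spheres of `[[0,1],[-1,τ]]` and of
its inverse `[[τ,-1],[1,0]]` have radius 1 and centres `τ` and `0`. Hence all `2n` spheres have
radius 1, and their centres have real parts `5m` for pairwise distinct naturals
`m ∈ {2k, 2k+1}`, so distinct centres lie at distance at least `5 > 1 + 1`.
-/

open Matrix

noncomputable def translationMatrix (w : ℂ) : Matrix (Fin 2) (Fin 2) ℂ := !![1, w; 0, 1]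

lemma translationMatrix_mul_translationMatrix (w w' : ℂ) :
    translationMatrix w * translationMatrix w' = translationMatrix (w + w') := by
  ext i j; fin_cases i <;> fin_cases j <;> simp [translationMatrix, add_comm]

lemma translationMatrix_inv (w : ℂ) : (translationMatrix w)⁻¹ = translationMatrix (-w) :=
  inv_eq_right_inv <| by
    rw [translationMatrix_mul_translationMatrix, add_neg_cancel]; exact one_fin_two.symm

lemma Amat_pow (k : ℕ) : Amat ^ k = translationMatrix (10 * k) := by
  induction k with
  | zero => simp [translationMatrix, one_fin_two]
  | succ k ih =>
    rw [pow_succ, ih, show Amat = translationMatrix 10 from rfl,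
      translationMatrix_mul_translationMatrix]
    congr 1; push_cast; ring

section Conjugation

variable (M : Matrix (Fin 2) (Fin 2) ℂ) (w : ℂ)

lemma conj_translationMatrix_apply_one_zero :
    (translationMatrix w * M * (translationMatrix w)⁻¹) 1 0 = M 1 0 := by
  rw [translationMatrix_inv, eta_fin_two M]
  simp [translationMatrix]

lemma conj_translationMatrix_apply_one_one :
    (translationMatrix w * M * (translationMatrix w)⁻¹) 1 1 = M 1 1 - w * M 1 0 := by
  rw [translationMatrix_inv, eta_fin_two M]
  simp [translationMatrix, sub_eq_add_neg, mul_comm, add_comm]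

lemma sphereRadius_conj_translationMatrix :
    sphereRadius (translationMatrix w * M * (translationMatrix w)⁻¹) = sphereRadius M := by
  rw [sphereRadius, conj_translationMatrix_apply_one_zero, sphereRadius]

lemma sphereCenter_conj_translationMatrix (hM : M 1 0 ≠ 0) :
    sphereCenter (translationMatrix w * M * (translationMatrix w)⁻¹) = sphereCenter M + w := by
  rw [sphereCenter, conj_translationMatrix_apply_one_zero, conj_translationMatrix_apply_one_one,
    sphereCenter]
  field_simp; ring

lemma inv_conj_translationMatrix :
    (translationMatrix w * M * (translationMatrix w)⁻¹)⁻¹ =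
      translationMatrix w * M⁻¹ * (translationMatrix w)⁻¹ := by
  simp [Matrix.mul_inv_rev, translationMatrix_inv, mul_assoc]

end Conjugation

section Generator

variable (τ : ℂ)

lemma inv_generator : (!![0, 1; -1, τ] : Matrix (Fin 2) (Fin 2) ℂ)⁻¹ = !![τ, -1; 1, 0] :=
  inv_eq_right_inv (by simp [one_fin_two])

lemma sphereRadius_generator : sphereRadius !![0, 1; -1, τ] = 1 := by simp [sphereRadius]

lemma sphereCenter_generator : sphereCenter !![0, 1; -1, τ] = τ := by simp [sphereCenter]

lemma sphereRadius_generator_inv : sphereRadius (!![0, 1; -1, τ])⁻¹ = 1 := by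
  simp [sphereRadius, inv_generator]

lemma sphereCenter_generator_inv : sphereCenter (!![0, 1; -1, τ])⁻¹ = 0 := by
  simp [sphereCenter, inv_generator]

end Generator

section Family

variable {n : ℕ} (k : Fin n) (t : ℝ)

lemma γmat_eq_conj :
    γmat k t = translationMatrix (10 * (k : ℕ)) * !![0, 1; -1, 5 + (t - 2) * Complex.I] *
      (translationMatrix (10 * (k : ℕ)))⁻¹ := by
  rw [γmat, Amat_pow]

lemma sphereRadius_γmat : sphereRadius (γmat k t) = 1 := by
  rw [γmat_eq_conj, sphereRadius_conj_translationMatrix, sphereRadius_generator]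

lemma sphereCenter_γmat :
    sphereCenter (γmat k t) = 5 + 10 * (k : ℕ) + (t - 2) * Complex.I := by
  rw [γmat_eq_conj, sphereCenter_conj_translationMatrix _ _ (by simp), sphereCenter_generator]
  ring

lemma sphereRadius_γmat_inv : sphereRadius (γmat k t)⁻¹ = 1 := by
  rw [γmat_eq_conj, inv_conj_translationMatrix, sphereRadius_conj_translationMatrix,
    sphereRadius_generator_inv]

lemma sphereCenter_γmat_inv : sphereCenter (γmat k t)⁻¹ = 10 * (k : ℕ) := by
  rw [γmat_eq_conj, inv_conj_translationMatrix,
    sphereCenter_conj_translationMatrix _ _ (by simp [inv_generator]), sphereCenter_generator_inv,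
    zero_add]

end Family

lemma sph_snd {n : ℕ} (t : Fin n → ℝ) (p : Fin n × Bool) : (sph t p).2 = 1 := by
  unfold sph; split_ifs <;> simp [sphereRadius_γmat, sphereRadius_γmat_inv]

lemma sph_fst_re {n : ℕ} (t : Fin n → ℝ) (p : Fin n × Bool) :
    (sph t p).1.re = 5 * ((2 * (p.1 : ℕ) + p.2.toNat : ℕ) : ℝ) := by
  obtain ⟨k, _ | _⟩ := p <;>
    norm_num [sph, sphereCenter_γmat, sphereCenter_γmat_inv, mul_add, ← mul_assoc, add_comm]

lemma sph_index_injective {n : ℕ} :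
    Function.Injective fun p : Fin n × Bool ↦ 2 * (p.1 : ℕ) + p.2.toNat := by
  rintro ⟨k, _ | _⟩ ⟨j, _ | _⟩ h <;> simp [Prod.ext_iff, Fin.ext_iff] at h ⊢ <;> omega

lemma le_norm_sub_of_re_eq_mul_nat (a : ℝ) {m m' : ℕ} (hm : m ≠ m') {z w : ℂ}
    (hz : z.re = a * m) (hw : w.re = a * m') : |a| ≤ ‖z - w‖ := by
  have hdist : (1 : ℝ) ≤ |(m : ℝ) - m'| := by
    exact_mod_cast Int.one_le_abs (sub_ne_zero.mpr (Int.ofNat_inj.not.mpr hm))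
  calc |a| ≤ |a| * |(m : ℝ) - m'| := le_mul_of_one_le_right (abs_nonneg a) hdist
    _ = |(z - w).re| := by rw [← abs_mul, sub_re, hz, hw, mul_sub]
    _ ≤ ‖z - w‖ := abs_re_le_norm _

theorem gamma_family_spheres_disjoint_general (n : ℕ) (t : Fin n → ℝ) :
    (∀ k : Fin n,
      sphereRadius ((γmat k (t k))⁻¹) = 1 ∧
      sphereCenter ((γmat k (t k))⁻¹) = 10 * (k : ℕ) ∧
      sphereRadius (γmat k (t k)) = 1 ∧
      sphereCenter (γmat k (t k)) = 5 + 10 * (k : ℕ) + (t k - 2) * Complex.I) ∧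
    (∀ p q : Fin n × Bool, p ≠ q →
      ‖(sph t p).1 - (sph t q).1‖ > (sph t p).2 + (sph t q).2) := by
  refine ⟨fun k ↦ ⟨sphereRadius_γmat_inv k _, sphereCenter_γmat_inv k _,
    sphereRadius_γmat k _, sphereCenter_γmat k _⟩, fun p q hpq ↦ ?_⟩
  have hdist : (5 : ℝ) ≤ ‖(sph t p).1 - (sph t q).1‖ := by
    simpa using le_norm_sub_of_re_eq_mul_nat 5 (sph_index_injective.ne hpq)
      (sph_fst_re t p) (sph_fst_re t q)
  rw [sph_snd, sph_snd]
  linarith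

/-- The isometric sphere of `γ_k(t)⁻¹` has radius 1 and center `10(k-1)`, that of
`γ_k(t)` has radius 1 and center `5 + 10(k-1) + (t-2)i`, and for all parameters
`t_k ∈ [0,4]` the `2n` isometric spheres of `γ_1^{±1}, …, γ_n^{±1}` are pairwise
disjoint. -/
theorem gamma_family_spheres_disjoint (n : ℕ) (t : Fin n → ℝ)
    (ht : ∀ k, t k ∈ Set.Icc (0 : ℝ) 4) :
    (∀ k : Fin n,
      sphereRadius ((γmat k (t k))⁻¹) = 1 ∧
      sphereCenter ((γmat k (t k))⁻¹) = 10 * (k : ℕ) ∧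
      sphereRadius (γmat k (t k)) = 1 ∧
      sphereCenter (γmat k (t k)) = 5 + 10 * (k : ℕ) + (t k - 2) * Complex.I) ∧
    (∀ p q : Fin n × Bool, p ≠ q →
      ‖(sph t p).1 - (sph t q).1‖ > (sph t p).2 + (sph t q).2) :=
  gamma_family_spheres_disjoint_general n t
end

section
/- Let Γ be a discrete torsion-free subgroup of PSL(2,ℂ) containing the parabolic subgroup Γ_∞ of all elements of Γ fixing ∞, and suppose Γ_∞ contains two parabolic translations with ℝ-linearly independent translation vectors. Then for every γ ∈ Γ \ Γ_∞, the radius of the isometric sphere I(γ) is at most T, where T is the minimal Euclidean translation length among nontrivial elements of Γ_∞. -/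
/-! Shimizu's argument.  Let `w = [[1,ω],[0,1]] ∈ Γ` and let `γ ∈ Γ` have lower-left entry `c ≠ 0`
with `|c ω| < 1`.  The iterated conjugates `γ₀ = γ`, `γₙ₊₁ = γₙ w γₙ⁻¹` have first columns
`(aₙ₊₁, cₙ₊₁) = (1 - aₙ cₙ ω, -cₙ² ω)`, so `|cₙ ω| = |c ω| ^ 2 ^ n` decays doubly exponentially,
`aₙ` stays bounded and tends to `1`, and `γₙ₊₁ → w`.  Since `cₙ ≠ 0` for all `n`, the elements
`γₙ₊₁ w⁻¹ ≠ 1` of `Γ` accumulate at `1`, contradicting discreteness. -/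

open Complex Filter

/-- The parabolic translation `[[1,ω],[0,1]]` as an element of `SL(2,ℂ)`. -/
noncomputable def transMat (ω : ℂ) : Matrix.SpecialLinearGroup (Fin 2) ℂ :=
  ⟨!![1, ω; 0, 1], by simp [Matrix.det_fin_two_of]⟩

open Topology Matrix.SpecialLinearGroup
open scoped MatrixGroups

local notation:1024 "↑ₘ" A:1024 => ((A : SL(2, ℂ)) : Matrix (Fin 2) (Fin 2) ℂ)

section SquaringDecay

variable {E : Type*} [SeminormedAddCommGroup E] {x : ℕ → E}

lemma norm_le_pow_two_pow_of_norm_succ_le_sq (hx : ∀ n, ‖x (n + 1)‖ ≤ ‖x n‖ ^ 2) (n : ℕ) :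
    ‖x n‖ ≤ ‖x 0‖ ^ 2 ^ n := by
  induction n with
  | zero => simp
  | succ n ih =>
    calc ‖x (n + 1)‖ ≤ ‖x n‖ ^ 2 := hx n
      _ ≤ (‖x 0‖ ^ 2 ^ n) ^ 2 := by gcongr
      _ = ‖x 0‖ ^ 2 ^ (n + 1) := by rw [← pow_mul, pow_succ]

lemma tendsto_zero_of_norm_succ_le_sq (hx : ∀ n, ‖x (n + 1)‖ ≤ ‖x n‖ ^ 2) (h0 : ‖x 0‖ < 1) :
    Tendsto x atTop (𝓝 0) :=
  squeeze_zero_norm (norm_le_pow_two_pow_of_norm_succ_le_sq hx)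
    ((tendsto_pow_atTop_nhds_zero_of_lt_one (norm_nonneg _) h0).comp
      (tendsto_pow_atTop_atTop_of_one_lt one_lt_two))

lemma norm_le_norm_zero_of_norm_succ_le_sq (hx : ∀ n, ‖x (n + 1)‖ ≤ ‖x n‖ ^ 2) (h0 : ‖x 0‖ ≤ 1)
    (n : ℕ) : ‖x n‖ ≤ ‖x 0‖ :=
  (norm_le_pow_two_pow_of_norm_succ_le_sq hx n).trans
    (pow_le_of_le_one (norm_nonneg _) h0 (pow_ne_zero n two_ne_zero))

end SquaringDecay

section OneSubMul

variable {R : Type*} [NormedRing R] [NormOneClass R] {a x : ℕ → R}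

lemma norm_le_max_of_eq_one_sub_mul {μ : ℝ} (ha : ∀ n, a (n + 1) = 1 - a n * x n)
    (hx : ∀ n, ‖x n‖ ≤ μ) (hμ : μ < 1) (n : ℕ) : ‖a n‖ ≤ max ‖a 0‖ (1 - μ)⁻¹ := by
  set M := max ‖a 0‖ (1 - μ)⁻¹
  have hμ0 : 0 ≤ μ := (norm_nonneg _).trans (hx 0)
  have hM : 1 ≤ M * (1 - μ) := by
    have hμ1 : 0 < 1 - μ := by linarith
    calc (1 : ℝ) = (1 - μ)⁻¹ * (1 - μ) := (inv_mul_cancel₀ hμ1.ne').symm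
      _ ≤ M * (1 - μ) := by gcongr; exact le_max_right _ _
  induction n with
  | zero => exact le_max_left _ _
  | succ n ih =>
    calc ‖a (n + 1)‖ ≤ 1 + ‖a n‖ * ‖x n‖ := by
          rw [ha n]
          exact (norm_sub_le _ _).trans (by rw [norm_one]; gcongr; exact norm_mul_le _ _)
      _ ≤ 1 + M * μ := by gcongr; exact hx n
      _ ≤ M := by linarith

lemma tendsto_one_of_eq_one_sub_mul (ha : ∀ n, a (n + 1) = 1 - a n * x n)
    (hx : ∀ n, ‖x (n + 1)‖ ≤ ‖x n‖ ^ 2) (h0 : ‖x 0‖ < 1) : Tendsto a atTop (𝓝 1) := by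
  have hbdd : IsBoundedUnder (· ≤ ·) atTop (norm ∘ a) :=
    isBoundedUnder_of ⟨_, norm_le_max_of_eq_one_sub_mul ha
      (norm_le_norm_zero_of_norm_succ_le_sq hx h0.le) h0⟩
  have hax : Tendsto (fun n => a n * x n) atTop (𝓝 0) :=
    isBoundedUnder_le_mul_tendsto_zero hbdd (tendsto_zero_of_norm_succ_le_sq hx h0)
  rw [← tendsto_add_atTop_iff_nat 1]
  simpa only [ha, sub_zero] using tendsto_const_nhds.sub hax

end OneSubMul

def conjTransMat (ω a c : ℂ) : Matrix (Fin 2) (Fin 2) ℂ :=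
  !![1 - a * c * ω, a ^ 2 * ω; -c ^ 2 * ω, 1 + a * c * ω]

lemma continuous_conjTransMat (ω : ℂ) : Continuous fun p : ℂ × ℂ => conjTransMat ω p.1 p.2 := by
  refine continuous_matrix fun i j => ?_
  fin_cases i <;> fin_cases j <;> simp [conjTransMat] <;> fun_prop

lemma conjTransMat_one_zero (ω : ℂ) : conjTransMat ω 1 0 = transMat ω := by
  simp [conjTransMat, transMat]

lemma coe_mul_transMat_mul_inv (M : SL(2, ℂ)) (ω : ℂ) :
    ↑ₘ(M * transMat ω * M⁻¹) = conjTransMat ω (↑ₘM 0 0) (↑ₘM 1 0) := by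
  have hdet : ↑ₘM 0 0 * ↑ₘM 1 1 - ↑ₘM 0 1 * ↑ₘM 1 0 = 1 := by
    rw [← Matrix.det_fin_two]
    exact M.det_coe
  rw [coe_mul, coe_mul, coe_inv, Matrix.adjugate_fin_two]
  ext i j
  fin_cases i <;> fin_cases j <;>
    simp [conjTransMat, transMat, Matrix.mul_apply] <;>
    first | ring1 | linear_combination hdet

section ConjSeq

variable {G : Type*} [Group G]

def conjSeq (w γ : G) : ℕ → G
  | 0 => γ
  | n + 1 => conjSeq w γ n * w * (conjSeq w γ n)⁻¹

lemma conjSeq_mem {Γ : Subgroup G} {w γ : G} (hw : w ∈ Γ) (hγ : γ ∈ Γ) (n : ℕ) :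
    conjSeq w γ n ∈ Γ := by
  induction n with
  | zero => exact hγ
  | succ n ih => exact Γ.mul_mem (Γ.mul_mem ih hw) (Γ.inv_mem ih)

end ConjSeq

section ConjSeqTransMat

variable {γ : SL(2, ℂ)} {ω : ℂ}

lemma coe_conjSeq_transMat_succ (n : ℕ) :
    ↑ₘ(conjSeq (transMat ω) γ (n + 1)) =
      conjTransMat ω (↑ₘ(conjSeq (transMat ω) γ n) 0 0) (↑ₘ(conjSeq (transMat ω) γ n) 1 0) :=
  coe_mul_transMat_mul_inv _ ω

lemma conjSeq_transMat_succ_apply_zero_zero (n : ℕ) :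
    ↑ₘ(conjSeq (transMat ω) γ (n + 1)) 0 0 =
      1 - ↑ₘ(conjSeq (transMat ω) γ n) 0 0 * ↑ₘ(conjSeq (transMat ω) γ n) 1 0 * ω := by
  simp [coe_conjSeq_transMat_succ, conjTransMat]

lemma conjSeq_transMat_succ_apply_one_zero (n : ℕ) :
    ↑ₘ(conjSeq (transMat ω) γ (n + 1)) 1 0 = -↑ₘ(conjSeq (transMat ω) γ n) 1 0 ^ 2 * ω := by
  simp [coe_conjSeq_transMat_succ, conjTransMat]

lemma conjSeq_transMat_apply_one_zero_ne_zero (hω : ω ≠ 0) (hγ : ↑ₘγ 1 0 ≠ 0) (n : ℕ) :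
    ↑ₘ(conjSeq (transMat ω) γ n) 1 0 ≠ 0 := by
  induction n with
  | zero => exact hγ
  | succ n ih =>
    rw [conjSeq_transMat_succ_apply_one_zero]
    exact mul_ne_zero (neg_ne_zero.2 (pow_ne_zero 2 ih)) hω

lemma tendsto_conjSeq_transMat (hω : ω ≠ 0) (hγ : ‖↑ₘγ 1 0 * ω‖ < 1) :
    Tendsto (fun n => ↑ₘ(conjSeq (transMat ω) γ (n + 1))) atTop (𝓝 (transMat ω)) := by
  set a : ℕ → ℂ := fun n => ↑ₘ(conjSeq (transMat ω) γ n) 0 0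
  set c : ℕ → ℂ := fun n => ↑ₘ(conjSeq (transMat ω) γ n) 1 0
  have hx : ∀ n, ‖c (n + 1) * ω‖ ≤ ‖c n * ω‖ ^ 2 := fun n => by
    have h : c (n + 1) = -c n ^ 2 * ω := conjSeq_transMat_succ_apply_one_zero n
    rw [h, norm_mul, norm_mul, norm_mul, norm_neg, norm_pow]
    exact le_of_eq (by ring)
  have ha : Tendsto a atTop (𝓝 1) :=
    tendsto_one_of_eq_one_sub_mul (x := fun n => c n * ω)
      (fun n => by rw [← mul_assoc]; exact conjSeq_transMat_succ_apply_zero_zero n) hx hγ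
  have hc : Tendsto c atTop (𝓝 0) := by
    simpa [hω] using (tendsto_zero_of_norm_succ_le_sq (x := fun n => c n * ω) hx hγ).mul_const ω⁻¹
  have hlim := (continuous_conjTransMat ω).continuousAt.tendsto.comp (ha.prodMk_nhds hc)
  rw [conjTransMat_one_zero] at hlim
  exact hlim.congr fun n => (coe_conjSeq_transMat_succ n).symm

end ConjSeqTransMat

theorem shimizu_leutbecher_general (Γ : Subgroup (Matrix.SpecialLinearGroup (Fin 2) ℂ))
    (hdisc : ∀ f : ℕ → Matrix.SpecialLinearGroup (Fin 2) ℂ, (∀ n, f n ∈ Γ) →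
      Tendsto (fun n => ((f n : Matrix (Fin 2) (Fin 2) ℂ))) atTop
        (nhds (1 : Matrix (Fin 2) (Fin 2) ℂ)) →
      ∀ᶠ n in atTop, f n = 1)
    (T : ℝ)
    (hT : IsLeast {r : ℝ | ∃ ω : ℂ, ω ≠ 0 ∧ transMat ω ∈ Γ ∧ r = ‖ω‖} T) :
    ∀ γ ∈ Γ, (γ : Matrix (Fin 2) (Fin 2) ℂ) 1 0 ≠ 0 →
      1 / ‖(γ : Matrix (Fin 2) (Fin 2) ℂ) 1 0‖ ≤ T := by
  intro γ hγ hc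
  by_contra! hlt
  obtain ⟨ω, hω, hωΓ, rfl⟩ := hT.1
  have hsmall : ‖↑ₘγ 1 0 * ω‖ < 1 := by
    rwa [norm_mul, ← lt_div_iff₀' (norm_pos_iff.2 hc)]
  have hlim : Tendsto (fun n => ↑ₘ(conjSeq (transMat ω) γ (n + 1) * (transMat ω)⁻¹))
      atTop (𝓝 1) := by
    have h := (tendsto_conjSeq_transMat hω hsmall).mul_const ↑ₘ(transMat ω)⁻¹
    rwa [← coe_mul, mul_inv_cancel, coe_one] at h
  obtain ⟨n, hn⟩ :=
    (hdisc _ (fun n => Γ.mul_mem (conjSeq_mem hωΓ hγ _) (Γ.inv_mem hωΓ)) hlim).exists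
  apply conjSeq_transMat_apply_one_zero_ne_zero hω hc (n + 1)
  rw [mul_inv_eq_one.1 hn]
  simp [transMat]

/-- Shimizu–Leutbecher: let `Γ ≤ SL(2,ℂ)` be discrete and torsion free, such that every
element of `Γ` fixing `∞` is a parabolic translation, and such that `Γ` contains two
parabolic translations with ℝ-linearly independent translation vectors.  If `T` is the
minimal Euclidean translation length among nontrivial translations in `Γ`, then for
every `γ ∈ Γ` not fixing `∞`, the radius `1/|c|` of the isometric sphere `I(γ)` is at
most `T`. -/
theorem shimizu_leutbecher (Γ : Subgroup (Matrix.SpecialLinearGroup (Fin 2) ℂ))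
    (hdisc : ∀ f : ℕ → Matrix.SpecialLinearGroup (Fin 2) ℂ, (∀ n, f n ∈ Γ) →
      Tendsto (fun n => ((f n : Matrix (Fin 2) (Fin 2) ℂ))) atTop
        (nhds (1 : Matrix (Fin 2) (Fin 2) ℂ)) →
      ∀ᶠ n in atTop, f n = 1)
    (htf : ∀ g ∈ Γ, ∀ n : ℕ, 0 < n → g ^ n = 1 → g = 1)
    (hpar : ∀ g ∈ Γ, (g : Matrix (Fin 2) (Fin 2) ℂ) 1 0 = 0 → ∃ ω : ℂ, g = transMat ω)
    (ω₁ ω₂ : ℂ) (hind : LinearIndependent ℝ ![ω₁, ω₂])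
    (h₁ : transMat ω₁ ∈ Γ) (h₂ : transMat ω₂ ∈ Γ)
    (T : ℝ)
    (hT : IsLeast {r : ℝ | ∃ ω : ℂ, ω ≠ 0 ∧ transMat ω ∈ Γ ∧ r = ‖ω‖} T) :
    ∀ γ ∈ Γ, (γ : Matrix (Fin 2) (Fin 2) ℂ) 1 0 ≠ 0 →
      1 / ‖(γ : Matrix (Fin 2) (Fin 2) ℂ) 1 0‖ ≤ T :=
  shimizu_leutbecher_general Γ hdisc T hT
end

section
/- Let S be a set (of 'curves'), and let 𝒞 be a graph on S (the curve graph) with edge distance d_S. Let ℋ be a graph whose vertices V are nonempty subsets D(V) ⊆ S (disk sets), with an edge between V and W whenever D(V) ∩ D(W) ≠ ∅. Define the inner distance d(A,B) = inf{d_S(a,b) : a ∈ A, b ∈ B}, and assume that for every edge {α,β} of 𝒞 there exists a vertex V of ℋ with α, β ∈ D(V). Then for all vertices V, W of ℋ, the graph distance in ℋ satisfies d_ℋ(V,W) ≤ d(D(V), D(W)) + 1. -/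
/-- Let `G` be a connected graph on a set `S` of curves, and let `H` be a connected
graph on a set `V` of handlebodies, each vertex `v` carrying a nonempty disk set
`D v ⊆ S`, with `v, w` adjacent in `H` iff `v ≠ w` and `D v ∩ D w ≠ ∅`.  Assume that
any two adjacent curves of `G` lie in a common disk set.  Then for all `v w`,
`d_H(v, w) ≤ d(D v, D w) + 1`, where `d(A, B) = inf{d_S(a,b) : a ∈ A, b ∈ B}` is the
inner distance in the curve graph. -/
theorem handlebody_graph_distance {S V : Type*} (G : SimpleGraph S) (hG : G.Connected)
    (D : V → Set S) (hne : ∀ v, (D v).Nonempty)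
    (H : SimpleGraph V) (hH : ∀ v w, H.Adj v w ↔ v ≠ w ∧ (D v ∩ D w).Nonempty)
    (hHconn : H.Connected)
    (hcommon : ∀ α β : S, G.Adj α β → ∃ v : V, α ∈ D v ∧ β ∈ D v) :
    ∀ v w : V, H.dist v w ≤ sInf {n : ℕ | ∃ a ∈ D v, ∃ b ∈ D w, n = G.dist a b} + 1 := by
  have dist_le_one : ∀ (v u : V) (x : S), x ∈ D v → x ∈ D u → H.dist v u ≤ 1 := by
    intro v u x hxv hxu
    by_cases hvu : v = u
    · subst hvu; simp [SimpleGraph.dist_self]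
    · have hadj : H.Adj v u := (hH v u).mpr ⟨hvu, ⟨x, hxv, hxu⟩⟩
      simpa using H.dist_le hadj.toWalk
  have key : ∀ (a b : S) (p : G.Walk a b) (v w : V), a ∈ D v → b ∈ D w →
      H.dist v w ≤ p.length + 1 := by
    intro a b p
    induction p with
    | nil =>
      intro v w ha hb
      exact le_trans (dist_le_one v w _ ha hb) (by norm_num)
    | @cons a c b h p ih =>
      intro v w ha hb
      obtain ⟨u, hau, hcu⟩ := hcommon a c h
      have h1 : H.dist v u ≤ 1 := dist_le_one v u a ha hau
      have h2 : H.dist u w ≤ p.length + 1 := ih u w hcu hb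
      have h3 := hHconn.dist_triangle (u := v) (v := u) (w := w)
      simp only [SimpleGraph.Walk.length_cons]
      omega
  intro v w
  obtain ⟨a0, ha0⟩ := hne v
  obtain ⟨b0, hb0⟩ := hne w
  have hset : (sInf {n : ℕ | ∃ a ∈ D v, ∃ b ∈ D w, n = G.dist a b}) ∈
      {n : ℕ | ∃ a ∈ D v, ∃ b ∈ D w, n = G.dist a b} :=
    Nat.sInf_mem ⟨G.dist a0 b0, a0, ha0, b0, hb0, rfl⟩
  obtain ⟨a, ha, b, hb, hn⟩ := hset
  obtain ⟨p, hp⟩ := hG.exists_walk_length_eq_dist a b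
  calc H.dist v w ≤ p.length + 1 := key a b p v w ha hb
    _ = _ := by rw [hp, hn]
end

section
/- Let T > 0 and let γ = [[a,b],[c,d]] ∈ SL(2,ℂ) with c ≠ 0 and 1/|c| > T. Let w = [[1,ω],[0,1]] with 0 < |ω| ≤ T. Define the sequence γ₀ = γ, γ_{n+1} = γ_n w γ_n⁻¹. Then the lower-left entries c_n of γ_n satisfy |c_{n+1}| ≤ |c_n|² |ω| < |c_n|, so |c_n| → 0 as n → ∞. -/
/-! Conjugating `[[1,ω],[0,1]]` by `γ` gives lower-left entry `-c² ω`, so the lower-left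
entries obey `c (n + 1) = c n ^ 2 * r` with `r = ‖ω‖`. The substitution `x n = c n * r` turns
this into `x (n + 1) = x n ^ 2`, so `c n * r = (c 0 * r) ^ 2 ^ n`, and everything follows from
`0 < c 0 * r < 1`. -/

open Complex Filter

theorem Matrix.SpecialLinearGroup.conj_transMat_apply_one_zero (S : SpecialLinearGroup (Fin 2) ℂ)
    (ω : ℂ) : ((S * transMat ω * S⁻¹ : SpecialLinearGroup (Fin 2) ℂ) : Matrix (Fin 2) (Fin 2) ℂ) 1 0 =
      -(S : Matrix (Fin 2) (Fin 2) ℂ) 1 0 ^ 2 * ω := by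
  rw [coe_mul, coe_mul, coe_inv]
  simp [transMat, adjugate_fin_two, mul_apply]
  ring

theorem mul_eq_pow_two_pow_of_succ_eq_sq_mul {M : Type*} [CommMonoid M] {c : ℕ → M} {r : M}
    (h : ∀ n, c (n + 1) = c n ^ 2 * r) (n : ℕ) : c n * r = (c 0 * r) ^ 2 ^ n := by
  induction n with
  | zero => simp
  | succ n ih => rw [h, pow_succ 2 n, pow_mul, ← ih, mul_pow, sq r, mul_assoc]

section SquaringRecursion

variable {c : ℕ → ℝ} {r : ℝ}

theorem succ_lt_of_succ_eq_sq_mul (h : ∀ n, c (n + 1) = c n ^ 2 * r) (hr : 0 < r)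
    (h0 : 0 < c 0 * r) (h1 : c 0 * r < 1) (n : ℕ) : c (n + 1) < c n := by
  have hx : c n * r = (c 0 * r) ^ 2 ^ n := mul_eq_pow_two_pow_of_succ_eq_sq_mul h n
  have hx0 : 0 < c n * r := hx ▸ pow_pos h0 _
  have hx1 : c n * r < 1 := hx ▸ pow_lt_one₀ h0.le h1 (by positivity)
  have hcn : 0 < c n := pos_of_mul_pos_left hx0 hr.le
  calc c (n + 1) = c n * (c n * r) := by rw [h]; ring
    _ < c n * 1 := by gcongr
    _ = c n := mul_one _

theorem tendsto_zero_of_succ_eq_sq_mul (h : ∀ n, c (n + 1) = c n ^ 2 * r) (hr : 0 < r)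
    (h0 : 0 ≤ c 0 * r) (h1 : c 0 * r < 1) : Tendsto c atTop (nhds 0) := by
  have hc : c = fun n => (c 0 * r) ^ 2 ^ n / r := by
    ext n
    rw [← mul_eq_pow_two_pow_of_succ_eq_sq_mul h n, mul_div_cancel_right₀ _ hr.ne']
  have hpow : Tendsto (fun n : ℕ => (c 0 * r) ^ 2 ^ n) atTop (nhds 0) :=
    (tendsto_pow_atTop_nhds_zero_of_lt_one h0 h1).comp
      (tendsto_pow_atTop_atTop_of_one_lt one_lt_two)
  rw [hc]
  simpa using hpow.div_const r

end SquaringRecursion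

theorem shimizu_iteration_general (T : ℝ)
    (g : Matrix.SpecialLinearGroup (Fin 2) ℂ)
    (hc : (g : Matrix (Fin 2) (Fin 2) ℂ) 1 0 ≠ 0)
    (hrad : 1 / ‖(g : Matrix (Fin 2) (Fin 2) ℂ) 1 0‖ > T)
    (ω : ℂ) (hω0 : ω ≠ 0) (hωT : ‖ω‖ ≤ T)
    (f : ℕ → Matrix.SpecialLinearGroup (Fin 2) ℂ)
    (hf0 : f 0 = g) (hfs : ∀ n, f (n + 1) = f n * transMat ω * (f n)⁻¹) :
    (∀ n, ‖(f (n + 1) : Matrix (Fin 2) (Fin 2) ℂ) 1 0‖ ≤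
        ‖(f n : Matrix (Fin 2) (Fin 2) ℂ) 1 0‖ ^ 2 * ‖ω‖ ∧
      ‖(f (n + 1) : Matrix (Fin 2) (Fin 2) ℂ) 1 0‖ <
        ‖(f n : Matrix (Fin 2) (Fin 2) ℂ) 1 0‖) ∧
    Tendsto (fun n => ‖(f n : Matrix (Fin 2) (Fin 2) ℂ) 1 0‖) atTop
      (nhds 0) := by
  subst hf0
  set c : ℕ → ℝ := fun n => ‖(f n : Matrix (Fin 2) (Fin 2) ℂ) 1 0‖
  have hstep : ∀ n, c (n + 1) = c n ^ 2 * ‖ω‖ := fun n => by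
    simp only [c, hfs n, Matrix.SpecialLinearGroup.conj_transMat_apply_one_zero, norm_mul,
      norm_neg, norm_pow]
  have hc0 : 0 < c 0 := norm_pos_iff.mpr hc
  have hr : 0 < ‖ω‖ := norm_pos_iff.mpr hω0
  have h1 : c 0 * ‖ω‖ < 1 := calc
    c 0 * ‖ω‖ ≤ T * c 0 := by rw [mul_comm]; gcongr
    _ < 1 := (lt_div_iff₀ hc0).mp hrad
  exact ⟨fun n => ⟨(hstep n).le, succ_lt_of_succ_eq_sq_mul hstep hr (by positivity) h1 n⟩,
    tendsto_zero_of_succ_eq_sq_mul hstep hr (by positivity) h1⟩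

/-- Key step of the Shimizu–Leutbecher lemma: if `γ ∈ SL(2,ℂ)` has lower-left entry
`c ≠ 0` with `1/|c| > T`, and `w = [[1,ω],[0,1]]` with `0 < |ω| ≤ T`, then the
sequence `γ₀ = γ`, `γ_{n+1} = γ_n w γ_n⁻¹` has lower-left entries `c_n` satisfying
`|c_{n+1}| ≤ |c_n|²|ω| < |c_n|`, and `|c_n| → 0`. -/
theorem shimizu_iteration (T : ℝ) (hT : 0 < T)
    (g : Matrix.SpecialLinearGroup (Fin 2) ℂ)
    (hc : (g : Matrix (Fin 2) (Fin 2) ℂ) 1 0 ≠ 0)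
    (hrad : 1 / ‖(g : Matrix (Fin 2) (Fin 2) ℂ) 1 0‖ > T)
    (ω : ℂ) (hω0 : ω ≠ 0) (hωT : ‖ω‖ ≤ T)
    (f : ℕ → Matrix.SpecialLinearGroup (Fin 2) ℂ)
    (hf0 : f 0 = g) (hfs : ∀ n, f (n + 1) = f n * transMat ω * (f n)⁻¹) :
    (∀ n, ‖(f (n + 1) : Matrix (Fin 2) (Fin 2) ℂ) 1 0‖ ≤
        ‖(f n : Matrix (Fin 2) (Fin 2) ℂ) 1 0‖ ^ 2 * ‖ω‖ ∧
      ‖(f (n + 1) : Matrix (Fin 2) (Fin 2) ℂ) 1 0‖ <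
        ‖(f n : Matrix (Fin 2) (Fin 2) ℂ) 1 0‖) ∧
    Tendsto (fun n => ‖(f n : Matrix (Fin 2) (Fin 2) ℂ) 1 0‖) atTop
      (nhds 0) :=
  shimizu_iteration_general T g hc hrad ω hω0 hωT f hf0 hfs
end
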